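/- arXiv:2107.14007 — 2 statements merged into one kernel-verified Lean document; each statement's English description precedes it below -/
import Mathlib

section
/- Let T be a tree on n vertices with a perfect matching given by the edge set M, where n/2 is even, and suppose T admits a strong graceful labelling. Then the permutation g₂ = (0 n−2)(1 n−1)⋯(n/2−2 n/2)(n/2−1 n/2+1) of {0, 1, …, n − 1} — that is, the permutation sending each even label 2k to n − 2 − 2k and each odd label 2k+1 to n − 1 − 2k — is a generalised strongly graceful permutation of T. -/
/-!
Let `f` be a strong graceful labelling of a tree `T` on `n` vertices with perfect matching `M`.
Then `f` is a bijection onto `{0, …, n - 1}`, the `n / 2` matching edges carry the `n / 2` odd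
labels `|2a - (n - 1)|`, and hence every other edge joins two labels of equal parity and carries
an even label. A permutation `g` of `{0, …, n - 1}` therefore turns `f` into a strong graceful
labelling as soon as it maps complementary pairs `{a, n - 1 - a}` to complementary pairs (the
label of such a pair determines the pair) and preserves the distance between labels of equal
parity. Both hold for `g₂`, which is an involution.
-/

open SimpleGraph

/-- A graceful labelling of a graph `G` with `m` edges: an injective function
`f` from the vertices into `{0, 1, …, m}` such that the induced edge labels
`|f u − f v|` are pairwise distinct over the edges. -/
def IsGracefulLabeling {V : Type} (G : SimpleGraph V) (f : V → ℕ) : Prop :=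
  Function.Injective f ∧ (∀ v, f v ≤ G.edgeSet.ncard) ∧
  ∀ u v x y : V, G.Adj u v → G.Adj x y →
    Nat.dist (f u) (f v) = Nat.dist (f x) (f y) → s(u, v) = s(x, y)

/-- A strong graceful labelling of `G` on `n` vertices with respect to a matching `M`:
a graceful labelling such that `f x + f y = n - 1` for every edge `xy ∈ M`. -/
def IsStrongGracefulLabeling {V : Type} [Fintype V] (G : SimpleGraph V)
    (M : G.Subgraph) (f : V → ℕ) : Prop :=
  IsGracefulLabeling G f ∧ ∀ x y : V, M.Adj x y → f x + f y = Fintype.card V - 1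


/-- `g` is a generalised strongly graceful permutation of `G` (with matching `M`):
`g` permutes `{0, …, n-1}` and for every strong graceful labelling `f`,
the labelling `g ∘ f` is again a strong graceful labelling. -/
def IsGenStronglyGracefulPerm {V : Type} [Fintype V] (G : SimpleGraph V)
    (M : G.Subgraph) (g : ℕ → ℕ) : Prop :=
  Set.BijOn g (Set.Iio (Fintype.card V)) (Set.Iio (Fintype.card V)) ∧
  ∀ f : V → ℕ, IsStrongGracefulLabeling G M f → IsStrongGracefulLabeling G M (g ∘ f)

open Set

def g2 (n b : ℕ) : ℕ := if Even b then n - 2 - b else n - b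

theorem Nat.eq_and_eq_or_eq_and_eq_of_dist_eq_of_add_eq {m a b c d : ℕ} (hab : a + b = m)
    (hcd : c + d = m) (h : Nat.dist a b = Nat.dist c d) : (a = c ∧ b = d) ∨ (a = d ∧ b = c) := by
  unfold Nat.dist at h
  omega

theorem Nat.dist_ne_dist_of_mod_two {a b c d : ℕ} (hab : a % 2 ≠ b % 2) (hcd : c % 2 = d % 2) :
    Nat.dist a b ≠ Nat.dist c d := by
  unfold Nat.dist
  omega

theorem SimpleGraph.IsTree.ncard_edgeSet {V : Type} [Fintype V] {G : SimpleGraph V}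
    (hT : G.IsTree) : G.edgeSet.ncard = Fintype.card V - 1 := by
  classical
  have := hT.card_edgeFinset
  rw [← coe_edgeFinset, ncard_coe_finset]
  omega

section g2

variable {n a b : ℕ}

theorem g2_lt (ha : a < n) : g2 n a < n := by
  unfold g2
  split_ifs with h
  · omega
  · have : a ≠ 0 := by rintro rfl; exact h (by decide)
    omega

theorem g2_g2 (hn : Even n) (ha : a < n) : g2 n (g2 n a) = a := by
  unfold g2
  rw [Nat.even_iff] at hn
  split_ifs <;> rw [Nat.even_iff] at * <;> omega

theorem bijOn_g2 (hn : Even n) : BijOn (g2 n) (Iio n) (Iio n) :=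
  InvOn.bijOn ⟨fun _ ha ↦ g2_g2 hn ha, fun _ ha ↦ g2_g2 hn ha⟩ (fun _ ↦ g2_lt) (fun _ ↦ g2_lt)

theorem g2_add_g2 (hn : Even n) (hab : a + b = n - 1) : g2 n a + g2 n b = n - 1 := by
  unfold g2
  rw [Nat.even_iff] at hn
  split_ifs <;> rw [Nat.even_iff] at * <;> omega

theorem dist_g2_g2 (hn : Even n) (ha : a < n) (hb : b < n) (hab : a % 2 = b % 2) :
    Nat.dist (g2 n a) (g2 n b) = Nat.dist a b := by
  unfold g2 Nat.dist
  rw [Nat.even_iff] at hn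
  split_ifs <;> rw [Nat.even_iff] at * <;> omega

end g2

namespace IsStrongGracefulLabeling

variable {V : Type} [Fintype V] {G : SimpleGraph V} {M : G.Subgraph} {f : V → ℕ}

theorem lt_card (hT : G.IsTree) (hf : IsStrongGracefulLabeling G M f) (v : V) :
    f v < Fintype.card V := by
  have hpos : 0 < Fintype.card V := @Fintype.card_pos _ _ hT.connected.nonempty
  have := hf.1.2.1 v
  rw [hT.ncard_edgeSet] at this
  omega

theorem exists_eq (hT : G.IsTree) (hf : IsStrongGracefulLabeling G M f) {a : ℕ}
    (ha : a < Fintype.card V) : ∃ v, f v = a := by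
  classical
  have himage : Finset.univ.image f = Finset.range (Fintype.card V) :=
    Finset.eq_of_subset_of_card_le
      (fun _ hc ↦ by
        obtain ⟨v, -, rfl⟩ := Finset.mem_image.1 hc
        exact Finset.mem_range.2 (hf.lt_card hT v))
      (by rw [Finset.card_range, Finset.card_image_of_injective _ hf.1.1, Finset.card_univ])
  have : a ∈ Finset.univ.image f := himage ▸ Finset.mem_range.2 ha
  simpa using this

/-- The odd label `ℓ` is already carried by the matching edge at the vertex labelled
`(n - 1 - ℓ) / 2`. -/
theorem matching_adj_of_odd_dist (hT : G.IsTree) (hM : M.IsPerfectMatching)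
    (hf : IsStrongGracefulLabeling G M f) {u v : V} (huv : G.Adj u v)
    (hodd : Odd (Nat.dist (f u) (f v))) : M.Adj u v := by
  have hn := hM.even_card
  have hu := hf.lt_card hT u
  have hv := hf.lt_card hT v
  rw [Nat.odd_iff] at hodd
  rw [Nat.even_iff] at hn
  unfold Nat.dist at hodd
  obtain ⟨x, hx⟩ := hf.exists_eq hT
    (a := (Fintype.card V - 1 - Nat.dist (f u) (f v)) / 2) (by unfold Nat.dist; omega)
  obtain ⟨y, hxy, -⟩ := Subgraph.isPerfectMatching_iff.1 hM x
  have hsum := hf.2 x y hxy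
  have hedge : s(u, v) = s(x, y) :=
    hf.1.2.2 u v x y huv hxy.adj_sub (by unfold Nat.dist at hx ⊢; omega)
  rcases Sym2.eq_iff.1 hedge with ⟨rfl, rfl⟩ | ⟨rfl, rfl⟩
  exacts [hxy, hxy.symm]

theorem mod_two_eq_of_not_matching_adj (hT : G.IsTree) (hM : M.IsPerfectMatching)
    (hf : IsStrongGracefulLabeling G M f) {u v : V} (huv : G.Adj u v) (hM' : ¬M.Adj u v) :
    f u % 2 = f v % 2 := by
  have := mt (hf.matching_adj_of_odd_dist hT hM huv) hM'
  rw [Nat.not_odd_iff] at this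
  unfold Nat.dist at this
  omega

theorem comp (hT : G.IsTree) (hM : M.IsPerfectMatching) (hf : IsStrongGracefulLabeling G M f)
    {g : ℕ → ℕ} (hmaps : MapsTo g (Iio (Fintype.card V)) (Iio (Fintype.card V)))
    (hinj : InjOn g (Iio (Fintype.card V)))
    (hadd : ∀ a b, a + b = Fintype.card V - 1 → g a + g b = Fintype.card V - 1)
    (hdist : ∀ a b, a < Fintype.card V → b < Fintype.card V → a % 2 = b % 2 →
      Nat.dist (g a) (g b) = Nat.dist a b) :
    IsStrongGracefulLabeling G M (g ∘ f) := by
  have hn := hM.even_card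
  have hpos : 0 < Fintype.card V := @Fintype.card_pos _ _ hT.connected.nonempty
  have hlt := hf.lt_card hT
  have hinj' : ∀ v w, g (f v) = g (f w) → v = w := fun v w h ↦ hf.1.1 (hinj (hlt v) (hlt w) h)
  have hmatch : ∀ x y, M.Adj x y → g (f x) + g (f y) = Fintype.card V - 1 :=
    fun x y hxy ↦ hadd _ _ (hf.2 x y hxy)
  have hparity : ∀ u v, G.Adj u v → ¬M.Adj u v → f u % 2 = f v % 2 :=
    fun _ _ ↦ hf.mod_two_eq_of_not_matching_adj hT hM
  have hmatch_parity : ∀ x y, M.Adj x y → g (f x) % 2 ≠ g (f y) % 2 := by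
    intro x y hxy
    have := hmatch x y hxy
    rw [Nat.even_iff] at hn
    omega
  refine ⟨⟨hinj', fun v ↦ ?_, fun u v x y huv hxy hd ↦ ?_⟩, hmatch⟩
  · rw [hT.ncard_edgeSet]
    have : g (f v) < Fintype.card V := hmaps (hlt v)
    simp only [Function.comp_apply]
    omega
  simp only [Function.comp_apply] at hd
  by_cases huvM : M.Adj u v <;> by_cases hxyM : M.Adj x y
  · rcases Nat.eq_and_eq_or_eq_and_eq_of_dist_eq_of_add_eq (hmatch u v huvM) (hmatch x y hxyM) hd
      with ⟨h₁, h₂⟩ | ⟨h₁, h₂⟩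
    · rw [hinj' _ _ h₁, hinj' _ _ h₂]
    · rw [hinj' _ _ h₁, hinj' _ _ h₂, Sym2.eq_swap]
  · have hxy' := hparity x y hxy hxyM
    rw [hdist _ _ (hlt x) (hlt y) hxy'] at hd
    exact absurd hd (Nat.dist_ne_dist_of_mod_two (hmatch_parity u v huvM) hxy')
  · have huv' := hparity u v huv huvM
    rw [hdist _ _ (hlt u) (hlt v) huv'] at hd
    exact absurd hd.symm (Nat.dist_ne_dist_of_mod_two (hmatch_parity x y hxyM) huv')
  · rw [hdist _ _ (hlt u) (hlt v) (hparity u v huv huvM),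
      hdist _ _ (hlt x) (hlt y) (hparity x y hxy hxyM)] at hd
    exact hf.1.2.2 u v x y huv hxy hd

end IsStrongGracefulLabeling

theorem g2_genStronglyGracefulPerm_of_even_general {V : Type} [Fintype V] (G : SimpleGraph V)
    (hT : G.IsTree)
    (M : G.Subgraph) (hM : M.IsPerfectMatching) :
    IsGenStronglyGracefulPerm G M
      (fun b => if Even b then Fintype.card V - 2 - b else Fintype.card V - b) := by
  have hn := hM.even_card
  refine ⟨bijOn_g2 hn, fun f hf ↦ ?_⟩
  exact hf.comp (g := g2 (Fintype.card V)) hT hM (bijOn_g2 hn).mapsTo (bijOn_g2 hn).injOn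
    (fun _ _ ↦ g2_add_g2 hn) (fun _ _ ha hb ↦ dist_g2_g2 hn ha hb)

/-- When `n / 2` is even, the permutation `g₂ = (0 n-2)(1 n-1)⋯(n/2-2 n/2)(n/2-1 n/2+1)`,
sending each even label `b` to `n - 2 - b` and each odd label `b` to `n - b`, is a
generalised strongly graceful permutation of a strongly graceful tree `T` on `n` vertices. -/
theorem g2_genStronglyGracefulPerm_of_even {V : Type} [Fintype V] (G : SimpleGraph V)
    (hT : G.IsTree) (hhalf : Even (Fintype.card V / 2))
    (M : G.Subgraph) (hM : M.IsPerfectMatching)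
    (hex : ∃ f : V → ℕ, IsStrongGracefulLabeling G M f) :
    IsGenStronglyGracefulPerm G M
      (fun b => if Even b then Fintype.card V - 2 - b else Fintype.card V - b) :=
  g2_genStronglyGracefulPerm_of_even_general G hT M hM
end

section
/- Let T be a tree on n vertices with a perfect matching given by the edge set M, where n/2 is odd, and suppose T admits a strong graceful labelling. Then the permutation g₂ = (0 n−2)(1 n−1)⋯(n/2−3 n/2+1)(n/2−2 n/2+2) of {0, 1, …, n − 1}, which fixes n/2 − 1 and n/2 and sends every other even label 2k to n − 2 − 2k and every other odd label 2k+1 to n − 1 − 2k, is a generalised strongly graceful permutation of T. -/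
open SimpleGraph

/-!
Let `f` be a strong graceful labelling of a tree on `n` vertices. The `n / 2` matching edges `xy`
have `f x + f y = n - 1` odd, so they carry `n / 2` distinct odd labels below `n`, i.e. all of
them; hence every other edge joins two labels of the same parity. The permutation `g₂` reflects
each parity class into itself, so it keeps the labels of those edges. As `n ≡ 2 mod 4`, it keeps
the matching sums `n - 1` and acts on the odd labels of matching edges by the involution
`1 ↦ 1`, `4k + 1 ↦ 4k - 1`, `4k + 3 ↦ 4k + 5`. So `g₂ ∘ f` again has distinct edge labels.
-/

def g2Perm (n b : ℕ) : ℕ := if Even b then n - 2 - b else n - b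

def g2EdgeLabel (d : ℕ) : ℕ :=
  if d % 4 = 1 then (if d = 1 then d else d - 2) else if d % 4 = 3 then d + 2 else d

lemma g2EdgeLabel_involutive : Function.Involutive g2EdgeLabel := by
  intro d
  simp only [g2EdgeLabel]
  split_ifs <;> omega

section g2Perm

variable {n a b : ℕ}

lemma g2Perm_of_even (hb : b % 2 = 0) : g2Perm n b = n - 2 - b :=
  if_pos (Nat.even_iff.mpr hb)

lemma g2Perm_of_odd (hb : b % 2 = 1) : g2Perm n b = n - b :=
  if_neg (Nat.not_even_iff.mpr hb)

lemma g2Perm_lt (hb : b < n) : g2Perm n b < n := by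
  simp only [g2Perm, Nat.even_iff]
  split_ifs <;> omega

lemma g2Perm_g2Perm (hn : Even n) (hb : b < n) : g2Perm n (g2Perm n b) = b := by
  rw [Nat.even_iff] at hn
  simp only [g2Perm, Nat.even_iff]
  split_ifs <;> omega

lemma bijOn_g2Perm (hn : Even n) : Set.BijOn (g2Perm n) (Set.Iio n) (Set.Iio n) :=
  Set.InvOn.bijOn ⟨fun _ hb => g2Perm_g2Perm hn hb, fun _ hb => g2Perm_g2Perm hn hb⟩
    (fun _ => g2Perm_lt) (fun _ => g2Perm_lt)

lemma g2Perm_add_g2Perm (hn : n % 4 = 2) (h : a + b = n - 1) :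
    g2Perm n a + g2Perm n b = n - 1 := by
  simp only [g2Perm, Nat.even_iff]
  split_ifs <;> omega

lemma dist_g2Perm_of_add_eq (hn : n % 4 = 2) (h : a + b = n - 1) :
    Nat.dist (g2Perm n a) (g2Perm n b) = g2EdgeLabel (Nat.dist a b) := by
  unfold g2EdgeLabel Nat.dist
  rcases Nat.mod_two_eq_zero_or_one a with ha | ha
  · rw [g2Perm_of_even ha, g2Perm_of_odd (by omega)]
    split_ifs <;> omega
  · rw [g2Perm_of_odd ha, g2Perm_of_even (by omega)]
    split_ifs <;> omega

lemma dist_g2Perm_of_mod_two_eq (hn : Even n) (ha : a < n) (hb : b < n) (h : a % 2 = b % 2) :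
    Nat.dist (g2Perm n a) (g2Perm n b) = g2EdgeLabel (Nat.dist a b) := by
  rw [Nat.even_iff] at hn
  unfold g2EdgeLabel Nat.dist
  rcases Nat.mod_two_eq_zero_or_one a with ha' | ha'
  · rw [g2Perm_of_even ha', g2Perm_of_even (by omega)]
    split_ifs <;> omega
  · rw [g2Perm_of_odd ha', g2Perm_of_odd (by omega)]
    split_ifs <;> omega

end g2Perm

namespace SimpleGraph

variable {V : Type} [Fintype V] {G : SimpleGraph V}

lemma IsTree.ncard_edgeSet_add_one (hT : G.IsTree) : G.edgeSet.ncard + 1 = Fintype.card V := by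
  rw [← Nat.card_coe_set_eq, ← Nat.card_eq_fintype_card]
  exact (isTree_iff_connected_and_card.mp hT).2

lemma Subgraph.IsPerfectMatching.two_mul_ncard_edgeSet {M : G.Subgraph}
    (hM : M.IsPerfectMatching) : 2 * M.edgeSet.ncard = Fintype.card V := by
  classical
  rw [← M.edgeSet_spanningCoe, ← Nat.card_coe_set_eq, Nat.card_eq_fintype_card,
    card_edgeSet, ← sum_degrees_eq_twice_card_edges]
  simp [isPerfectMatching_iff_forall_degree.mp hM]

end SimpleGraph

section Labelling

variable {V : Type} {G : SimpleGraph V} {f : V → ℕ}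

def edgeLabel (f : V → ℕ) : Sym2 V → ℕ :=
  Sym2.lift ⟨fun a b => Nat.dist (f a) (f b), fun a b => Nat.dist_comm (f a) (f b)⟩

@[simp] lemma edgeLabel_mk (f : V → ℕ) (a b : V) : edgeLabel f s(a, b) = Nat.dist (f a) (f b) :=
  rfl

lemma IsGracefulLabeling.injOn_edgeLabel (hf : IsGracefulLabeling G f) :
    Set.InjOn (edgeLabel f) G.edgeSet := by
  intro e₁ he₁ e₂ he₂ h
  induction e₁ using Sym2.ind
  induction e₂ using Sym2.ind
  exact hf.2.2 _ _ _ _ he₁ he₂ h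

lemma IsGracefulLabeling.lt_card [Fintype V] (hT : G.IsTree) (hf : IsGracefulLabeling G f)
    (v : V) : f v < Fintype.card V := by
  have := hf.2.1 v
  have := hT.ncard_edgeSet_add_one
  omega

variable [Fintype V] {M : G.Subgraph} {u v : V}

lemma IsStrongGracefulLabeling.odd_dist (hM : M.IsPerfectMatching)
    (hf : IsStrongGracefulLabeling G M f) (huv : M.Adj u v) : Odd (Nat.dist (f u) (f v)) := by
  have hsum := hf.2 u v huv
  have hn := Nat.even_iff.mp hM.even_card
  have : 0 < Fintype.card V := Fintype.card_pos_iff.mpr ⟨u⟩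
  rw [Nat.odd_iff, Nat.dist]
  omega

lemma IsStrongGracefulLabeling.edgeLabel_image_edgeSet (hT : G.IsTree) (hM : M.IsPerfectMatching)
    (hf : IsStrongGracefulLabeling G M f) :
    edgeLabel f '' M.edgeSet = (fun k => 2 * k + 1) '' Set.Iio (Fintype.card V / 2) := by
  have hinj : Set.InjOn (edgeLabel f) M.edgeSet := hf.1.injOn_edgeLabel.mono M.edgeSet_subset
  refine Set.eq_of_subset_of_ncard_le ?_ ?_ ((Set.finite_Iio _).image _)
  · rintro _ ⟨e, he, rfl⟩
    induction e using Sym2.ind with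
    | _ x y =>
      obtain ⟨k, hk⟩ := hf.odd_dist hM he
      have hx := hf.1.lt_card hT x
      have hy := hf.1.lt_card hT y
      refine ⟨k, ?_, hk.symm⟩
      simp only [Nat.dist] at hk
      simp only [Set.mem_Iio]
      omega
  · rw [Set.ncard_image_of_injective _ (fun _ _ h => by omega), Set.ncard_Iio_nat,
      hinj.ncard_image, ← hM.two_mul_ncard_edgeSet]
    omega

lemma IsStrongGracefulLabeling.mod_two_eq_of_not_adj (hT : G.IsTree) (hM : M.IsPerfectMatching)
    (hf : IsStrongGracefulLabeling G M f) (huv : G.Adj u v) (hnot : ¬M.Adj u v) :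
    f u % 2 = f v % 2 := by
  by_contra hpar
  have hu := hf.1.lt_card hT u
  have hv := hf.1.lt_card hT v
  have hodd : edgeLabel f s(u, v) ∈ (fun k => 2 * k + 1) '' Set.Iio (Fintype.card V / 2) :=
    ⟨Nat.dist (f u) (f v) / 2, by simp only [Set.mem_Iio, Nat.dist]; omega,
      by simp only [edgeLabel_mk, Nat.dist]; omega⟩
  rw [← hf.edgeLabel_image_edgeSet hT hM] at hodd
  obtain ⟨e, he, heq⟩ := hodd
  rw [hf.1.injOn_edgeLabel (M.edgeSet_subset he) huv heq] at he
  exact hnot he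

lemma IsStrongGracefulLabeling.dist_g2Perm (hT : G.IsTree) (hM : M.IsPerfectMatching)
    (hf : IsStrongGracefulLabeling G M f) (hn : Fintype.card V % 4 = 2) (huv : G.Adj u v) :
    Nat.dist (g2Perm (Fintype.card V) (f u)) (g2Perm (Fintype.card V) (f v)) =
      g2EdgeLabel (Nat.dist (f u) (f v)) := by
  by_cases hm : M.Adj u v
  · exact dist_g2Perm_of_add_eq hn (hf.2 u v hm)
  · exact dist_g2Perm_of_mod_two_eq hM.even_card (hf.1.lt_card hT u) (hf.1.lt_card hT v)
      (hf.mod_two_eq_of_not_adj hT hM huv hm)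

lemma IsStrongGracefulLabeling.g2Perm_comp (hT : G.IsTree) (hM : M.IsPerfectMatching)
    (hf : IsStrongGracefulLabeling G M f) (hn : Fintype.card V % 4 = 2) :
    IsStrongGracefulLabeling G M (g2Perm (Fintype.card V) ∘ f) := by
  refine ⟨⟨fun u v h => ?_, fun v => ?_, fun u v x y huv hxy h => ?_⟩,
    fun x y h => g2Perm_add_g2Perm hn (hf.2 x y h)⟩
  · exact hf.1.1 <| (bijOn_g2Perm hM.even_card).injOn (hf.1.lt_card hT u) (hf.1.lt_card hT v) h
  · have := g2Perm_lt (hf.1.lt_card hT v)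
    have := hT.ncard_edgeSet_add_one
    simp only [Function.comp_apply]
    omega
  · simp only [Function.comp_apply, hf.dist_g2Perm hT hM hn huv, hf.dist_g2Perm hT hM hn hxy] at h
    exact hf.1.2.2 u v x y huv hxy (g2EdgeLabel_involutive.injective h)

end Labelling

theorem g2_genStronglyGracefulPerm_of_odd_general {V : Type} [Fintype V] (G : SimpleGraph V)
    (hT : G.IsTree) (hhalf : Odd (Fintype.card V / 2))
    (M : G.Subgraph) (hM : M.IsPerfectMatching) :
    IsGenStronglyGracefulPerm G M
      (fun b => if Even b then Fintype.card V - 2 - b else Fintype.card V - b) := by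
  have hn : Fintype.card V % 4 = 2 := by
    obtain ⟨k, hk⟩ := hhalf
    have := Nat.even_iff.mp hM.even_card
    omega
  exact ⟨bijOn_g2Perm hM.even_card, fun f hf => hf.g2Perm_comp hT hM hn⟩

/-- When `n / 2` is odd, the permutation `g₂ = (0 n-2)(1 n-1)⋯(n/2-3 n/2+1)(n/2-2 n/2+2)`,
which fixes `n/2 - 1` and `n/2` and sends every other even label `b` to `n - 2 - b` and
every other odd label `b` to `n - b` (note that the formulas `b ↦ n - 2 - b` for even `b`
and `b ↦ n - b` for odd `b` automatically fix `n/2 - 1` and `n/2` when `n/2` is odd),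
is a generalised strongly graceful permutation of a strongly graceful tree `T` on `n`
vertices. -/
theorem g2_genStronglyGracefulPerm_of_odd {V : Type} [Fintype V] (G : SimpleGraph V)
    (hT : G.IsTree) (hhalf : Odd (Fintype.card V / 2))
    (M : G.Subgraph) (hM : M.IsPerfectMatching)
    (hex : ∃ f : V → ℕ, IsStrongGracefulLabeling G M f) :
    IsGenStronglyGracefulPerm G M
      (fun b => if Even b then Fintype.card V - 2 - b else Fintype.card V - b) :=
  g2_genStronglyGracefulPerm_of_odd_general G hT hhalf M hM
end
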